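/- arXiv:1901.01742 — 5 statements merged into one kernel-verified Lean document; each statement's English description precedes it below -/
import Mathlib

section
/- Let Γ be a nonempty subset of a real normed vector space, let z be a point, and let x* ∈ Γ be a closest point of z in Γ, i.e. ‖z − x*‖ ≤ ‖z − w‖ for all w ∈ Γ. Then for every t ∈ [0,1], the point y_t = x* + t·(z − x*) on the segment from x* to z also has x* as a closest point in Γ; moreover ‖y_t − x*‖ = t·‖z − x*‖, so the distance from y_t to Γ equals t times the distance from z to Γ. -/
/-!
If `y` lies between `z` and its closest point `x` in `Γ`, then for every `w ∈ Γ` the triangle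
inequality gives `dist z y + dist y w ≥ dist z w ≥ dist z x = dist z y + dist y x`, so `x` is also
a closest point of `y`. On the segment from `x` to `z` the distance to `x` scales linearly in the
parameter, and for a closest point the distance to `Γ` is the distance to that point.
-/

open Metric

section ClosestPoint

variable {α : Type*} [PseudoMetricSpace α]

def IsClosestPoint (Γ : Set α) (z x : α) : Prop :=
  x ∈ Γ ∧ ∀ w ∈ Γ, dist z x ≤ dist z w

theorem IsClosestPoint.infDist_eq {Γ : Set α} {z x : α} (h : IsClosestPoint Γ z x) :
    infDist z Γ = dist z x :=
  le_antisymm (infDist_le_dist_of_mem h.1) ((le_infDist ⟨x, h.1⟩).2 h.2)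

theorem IsClosestPoint.of_dist_add_dist_eq {Γ : Set α} {z x y : α} (h : IsClosestPoint Γ z x)
    (hy : dist z y + dist y x = dist z x) : IsClosestPoint Γ y x := by
  refine ⟨h.1, fun w hw => ?_⟩
  have := h.2 w hw
  linarith [dist_triangle z y w]

theorem IsClosestPoint.of_wbtw {V P : Type*} [SeminormedAddCommGroup V] [NormedSpace ℝ V]
    [PseudoMetricSpace P] [NormedAddTorsor V P] {Γ : Set P} {z x y : P} (h : IsClosestPoint Γ z x) (hy : Wbtw ℝ x y z) :
    IsClosestPoint Γ y x :=
  h.of_dist_add_dist_eq hy.symm.dist_add_dist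

end ClosestPoint

theorem closest_point_along_segment_general
    {E : Type*} [NormedAddCommGroup E] [NormedSpace ℝ E]
    (Γ : Set E) (z xstar : E) (hx : xstar ∈ Γ)
    (hclosest : ∀ w ∈ Γ, ‖z - xstar‖ ≤ ‖z - w‖)
    (t : ℝ) (ht : t ∈ Set.Icc (0 : ℝ) 1) :
    (∀ w ∈ Γ, ‖(xstar + t • (z - xstar)) - xstar‖ ≤ ‖(xstar + t • (z - xstar)) - w‖) ∧
    ‖(xstar + t • (z - xstar)) - xstar‖ = t * ‖z - xstar‖ ∧
    Metric.infDist (xstar + t • (z - xstar)) Γ = t * Metric.infDist z Γ := by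
  have hy : xstar + t • (z - xstar) = AffineMap.lineMap xstar z t := by
    rw [AffineMap.lineMap_apply_module', add_comm]
  have hz : IsClosestPoint Γ z xstar := ⟨hx, by simpa only [dist_eq_norm] using hclosest⟩
  have hyx : IsClosestPoint Γ (xstar + t • (z - xstar)) xstar :=
    hz.of_wbtw (hy ▸ ⟨t, ht, rfl⟩)
  have hnorm : ‖(xstar + t • (z - xstar)) - xstar‖ = t * ‖z - xstar‖ := by
    rw [add_sub_cancel_left, norm_smul, Real.norm_of_nonneg ht.1]
  refine ⟨by simpa only [dist_eq_norm] using hyx.2, hnorm, ?_⟩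
  rw [hyx.infDist_eq, hz.infDist_eq, dist_eq_norm, dist_eq_norm, hnorm]

/-- If `x*` is a closest point of `z` in `Γ`, then every point
`y_t = x* + t • (z - x*)` on the segment from `x*` to `z` also has `x*` as a
closest point in `Γ`; moreover `‖y_t - x*‖ = t * ‖z - x*‖`, so the distance
from `y_t` to `Γ` is `t` times the distance from `z` to `Γ`. -/
theorem closest_point_along_segment
    {E : Type*} [NormedAddCommGroup E] [NormedSpace ℝ E]
    (Γ : Set E) (hΓ : Γ.Nonempty) (z xstar : E) (hx : xstar ∈ Γ)
    (hclosest : ∀ w ∈ Γ, ‖z - xstar‖ ≤ ‖z - w‖)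
    (t : ℝ) (ht : t ∈ Set.Icc (0 : ℝ) 1) :
    (∀ w ∈ Γ, ‖(xstar + t • (z - xstar)) - xstar‖ ≤ ‖(xstar + t • (z - xstar)) - w‖) ∧
    ‖(xstar + t • (z - xstar)) - xstar‖ = t * ‖z - xstar‖ ∧
    Metric.infDist (xstar + t • (z - xstar)) Γ = t * Metric.infDist z Γ :=
  closest_point_along_segment_general Γ z xstar hx hclosest t ht
end

section
/- Let Γ be a nonempty subset of a real normed vector space, let z be a point, and suppose x* ∈ Γ is the unique closest point of z in Γ, i.e. ‖z − x*‖ ≤ ‖z − w‖ for all w ∈ Γ, and any w ∈ Γ with ‖z − w‖ = ‖z − x*‖ equals x*. Then for every t ∈ [0,1], x* is the unique closest point in Γ of the point y_t = x* + t·(z − x*). Consequently, for any function u : Γ → ℝ, the constant-along-normal extension ũ(y) = u(closest point of y) is constant and equal to u(x*) along the whole segment from x* to z. -/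
/-! Moving the base point from `z` towards `x*` along the segment lowers the distance to `x*` by
exactly as much as it lowers the distance to `z` (`x*` and `z` are collinear with the new point),
while it lowers the distance to any other `w` by at most that amount (triangle inequality). So
`x*` stays a closest point, and any tie at the new point would already be a tie at `z`. -/

open scoped Convex

theorem norm_sub_sub_norm_sub_le_of_mem_segment {E : Type*} [SeminormedAddCommGroup E]
    [NormedSpace ℝ E] {x y z : E} (hy : y ∈ [x -[ℝ] z]) (w : E) :
    ‖z - w‖ - ‖z - x‖ ≤ ‖y - w‖ - ‖y - x‖ := by
  have hsplit : ‖y - x‖ + ‖z - y‖ = ‖z - x‖ := by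
    simpa only [dist_comm x, dist_comm y z, dist_eq_norm] using dist_add_dist_of_mem_segment hy
  linarith [norm_sub_le_norm_sub_add_norm_sub z y w]

theorem unique_closest_point_along_segment_general
    {E : Type*} [NormedAddCommGroup E] [NormedSpace ℝ E]
    (Γ : Set E) (z xstar : E) (hx : xstar ∈ Γ)
    (hclosest : ∀ w ∈ Γ, ‖z - xstar‖ ≤ ‖z - w‖)
    (huniq : ∀ w ∈ Γ, ‖z - w‖ = ‖z - xstar‖ → w = xstar)
    (t : ℝ) (ht : t ∈ Set.Icc (0 : ℝ) 1) :
    ((∀ w ∈ Γ, ‖(xstar + t • (z - xstar)) - xstar‖ ≤ ‖(xstar + t • (z - xstar)) - w‖) ∧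
      (∀ w ∈ Γ, ‖(xstar + t • (z - xstar)) - w‖ = ‖(xstar + t • (z - xstar)) - xstar‖ →
        w = xstar)) ∧
    ∀ (u : E → ℝ) (cp : E → E),
      (cp (xstar + t • (z - xstar)) ∈ Γ ∧
        ∀ w ∈ Γ, ‖(xstar + t • (z - xstar)) - cp (xstar + t • (z - xstar))‖ ≤
          ‖(xstar + t • (z - xstar)) - w‖) →
      u (cp (xstar + t • (z - xstar))) = u xstar := by
  set y := xstar + t • (z - xstar)
  have hy : y ∈ [xstar -[ℝ] z] := segment_eq_image' ℝ xstar z ▸ ⟨t, ht, rfl⟩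
  have hgain := norm_sub_sub_norm_sub_le_of_mem_segment hy
  have hmin : ∀ w ∈ Γ, ‖y - xstar‖ ≤ ‖y - w‖ := fun w hw => by
    linarith [hgain w, hclosest w hw]
  have hmin_uniq : ∀ w ∈ Γ, ‖y - w‖ = ‖y - xstar‖ → w = xstar := fun w hw htie =>
    huniq w hw (le_antisymm (by linarith [hgain w]) (hclosest w hw))
  refine ⟨⟨hmin, hmin_uniq⟩, fun u cp ⟨hcp_mem, hcp_min⟩ => ?_⟩
  rw [hmin_uniq _ hcp_mem (le_antisymm (hcp_min xstar hx) (hmin _ hcp_mem))]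

/-- If `x*` is the *unique* closest point of `z` in `Γ`, then for every
`t ∈ [0,1]`, `x*` is the unique closest point of `y_t = x* + t • (z - x*)`;
consequently the constant-along-normal extension `ũ = u ∘ cp` is constant
(equal to `u x*`) along the whole segment from `x*` to `z`. -/
theorem unique_closest_point_along_segment
    {E : Type*} [NormedAddCommGroup E] [NormedSpace ℝ E]
    (Γ : Set E) (hΓ : Γ.Nonempty) (z xstar : E) (hx : xstar ∈ Γ)
    (hclosest : ∀ w ∈ Γ, ‖z - xstar‖ ≤ ‖z - w‖)
    (huniq : ∀ w ∈ Γ, ‖z - w‖ = ‖z - xstar‖ → w = xstar)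
    (t : ℝ) (ht : t ∈ Set.Icc (0 : ℝ) 1) :
    ((∀ w ∈ Γ, ‖(xstar + t • (z - xstar)) - xstar‖ ≤ ‖(xstar + t • (z - xstar)) - w‖) ∧
      (∀ w ∈ Γ, ‖(xstar + t • (z - xstar)) - w‖ = ‖(xstar + t • (z - xstar)) - xstar‖ →
        w = xstar)) ∧
    ∀ (u : E → ℝ) (cp : E → E),
      (cp (xstar + t • (z - xstar)) ∈ Γ ∧
        ∀ w ∈ Γ, ‖(xstar + t • (z - xstar)) - cp (xstar + t • (z - xstar))‖ ≤
          ‖(xstar + t • (z - xstar)) - w‖) →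
      u (cp (xstar + t • (z - xstar))) = u xstar :=
  unique_closest_point_along_segment_general Γ z xstar hx hclosest huniq t ht
end

section
/- (Principle 2, hypersurface form.) Let d : ℝ^d → ℝ be twice continuously differentiable on a neighborhood U of a point x with ‖∇d(y)‖ = 1 for all y ∈ U, and set n = ∇d(x). Let w : ℝ^d → ℝ^d be differentiable at x and tangent to all level sets of d near x, i.e. ⟨w(y), ∇d(y)⟩ = 0 for all y ∈ U. Then ⟨(Dw(x))(n), n⟩ = 0; consequently the standard divergence of w at x equals the surface divergence, ∇·w(x) = ∇·w(x) − ⟨(Dw(x))(n), n⟩. -/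
/-!
Differentiating `⟪w, ∇d⟫ = 0` in the direction `n = ∇d x` gives
`⟪Dw n, n⟫ = -⟪w, D(∇d) n⟫`. The Hessian `D(∇d)` is self-adjoint, so the right-hand side is
`-⟪D(∇d) w, ∇d⟫`, which is half the derivative of `‖∇d‖² = 1` in the direction `w`, hence zero.
-/

open RealInnerProductSpace Filter Topology InnerProductSpace

section InnerConst

variable {E F : Type*} [NormedAddCommGroup E] [NormedSpace ℝ E]
  [NormedAddCommGroup F] [InnerProductSpace ℝ F] {f g : E → F} {x : E}

theorem inner_fderiv_add_inner_fderiv_eq_zero_of_inner_eventually_const {c : ℝ}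
    (hf : DifferentiableAt ℝ f x) (hg : DifferentiableAt ℝ g x)
    (hc : ∀ᶠ y in 𝓝 x, ⟪f y, g y⟫ = c) (v : E) :
    ⟪f x, fderiv ℝ g x v⟫ + ⟪fderiv ℝ f x v, g x⟫ = 0 := by
  rw [← fderiv_inner_apply ℝ hf hg, EventuallyEq.fderiv_eq (f := fun _ ↦ c) hc]
  simp

theorem inner_fderiv_apply_self_eq_zero_of_norm_eventually_const {r : ℝ}
    (hg : DifferentiableAt ℝ g x) (hr : ∀ᶠ y in 𝓝 x, ‖g y‖ = r) (v : E) :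
    ⟪fderiv ℝ g x v, g x⟫ = 0 := by
  have h := inner_fderiv_add_inner_fderiv_eq_zero_of_inner_eventually_const hg hg
    (hr.mono fun y hy ↦ by rw [real_inner_self_eq_norm_sq, hy]) v
  rw [← real_inner_comm (g x)] at h
  linarith

theorem ContDiffAt.differentiableAt_fderiv {f : E → F} (hf : ContDiffAt ℝ 2 f x) :
    DifferentiableAt ℝ (fderiv ℝ f) x :=
  (hf.fderiv_right (m := 1) le_rfl).differentiableAt one_ne_zero

end InnerConst

section Hessian

variable {E : Type*} [NormedAddCommGroup E] [InnerProductSpace ℝ E] [CompleteSpace E]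
  {f : E → ℝ} {x : E}

theorem hasFDerivAt_gradient (h : DifferentiableAt ℝ (fderiv ℝ f) x) :
    HasFDerivAt (gradient f)
      ((toDual ℝ E).symm.toContinuousLinearEquiv.toContinuousLinearMap.comp
        (fderiv ℝ (fderiv ℝ f) x)) x :=
  (toDual ℝ E).symm.toContinuousLinearEquiv.hasFDerivAt.comp x h.hasFDerivAt

theorem inner_fderiv_gradient_apply (h : DifferentiableAt ℝ (fderiv ℝ f) x) (u v : E) :
    ⟪fderiv ℝ (gradient f) x u, v⟫ = fderiv ℝ (fderiv ℝ f) x u v := by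
  rw [(hasFDerivAt_gradient h).fderiv]
  exact toDual_symm_apply

theorem ContDiffAt.differentiableAt_gradient (hf : ContDiffAt ℝ 2 f x) :
    DifferentiableAt ℝ (gradient f) x :=
  (hasFDerivAt_gradient hf.differentiableAt_fderiv).differentiableAt

theorem ContDiffAt.inner_fderiv_gradient_comm (hf : ContDiffAt ℝ 2 f x) (u v : E) :
    ⟪fderiv ℝ (gradient f) x u, v⟫ = ⟪u, fderiv ℝ (gradient f) x v⟫ := by
  rw [← real_inner_comm u, inner_fderiv_gradient_apply hf.differentiableAt_fderiv,
    inner_fderiv_gradient_apply hf.differentiableAt_fderiv]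
  exact (hf.isSymmSndFDerivAt (by simp)).eq u v

end Hessian

/-- Principle 2 (hypersurface form): if `d` is `C²` with `‖∇d‖ = 1` near `x`,
`n = ∇d(x)`, and the vector field `w` is tangent to all level sets of `d` near
`x`, then `⟪(Dw(x)) n, n⟫ = 0`; consequently the standard divergence of `w`
at `x` (the trace of its Jacobian) equals the surface divergence
`∇·w − ⟪(Dw) n, n⟫`. -/
theorem principle_two_divergence
    (d : ℕ) (dist : EuclideanSpace ℝ (Fin d) → ℝ)
    (x : EuclideanSpace ℝ (Fin d))
    (U : Set (EuclideanSpace ℝ (Fin d))) (hU : IsOpen U) (hxU : x ∈ U)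
    (hd : ContDiffOn ℝ 2 dist U)
    (heik : ∀ y ∈ U, ‖gradient dist y‖ = 1)
    (w : EuclideanSpace ℝ (Fin d) → EuclideanSpace ℝ (Fin d))
    (hw : DifferentiableAt ℝ w x)
    (htang : ∀ y ∈ U, ⟪w y, gradient dist y⟫ = 0) :
    ⟪(fderiv ℝ w x) (gradient dist x), gradient dist x⟫ = 0 ∧
      LinearMap.trace ℝ (EuclideanSpace ℝ (Fin d))
          (fderiv ℝ w x : EuclideanSpace ℝ (Fin d) →ₗ[ℝ] EuclideanSpace ℝ (Fin d)) =
        LinearMap.trace ℝ (EuclideanSpace ℝ (Fin d))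
            (fderiv ℝ w x : EuclideanSpace ℝ (Fin d) →ₗ[ℝ] EuclideanSpace ℝ (Fin d)) -
          ⟪(fderiv ℝ w x) (gradient dist x), gradient dist x⟫ := by
  have hUx : U ∈ 𝓝 x := hU.mem_nhds hxU
  have hd2 : ContDiffAt ℝ 2 dist x := hd.contDiffAt hUx
  have hgrad : DifferentiableAt ℝ (gradient dist) x := hd2.differentiableAt_gradient
  have hunit : ⟪fderiv ℝ (gradient dist) x (w x), gradient dist x⟫ = 0 :=
    inner_fderiv_apply_self_eq_zero_of_norm_eventually_const hgrad
      (eventually_of_mem hUx heik) (w x)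
  have htan := inner_fderiv_add_inner_fderiv_eq_zero_of_inner_eventually_const hw hgrad
    (eventually_of_mem hUx htang) (gradient dist x)
  have hnormal : ⟪fderiv ℝ w x (gradient dist x), gradient dist x⟫ = 0 := by
    rwa [← hd2.inner_fderiv_gradient_comm, hunit, zero_add] at htan
  exact ⟨hnormal, by rw [hnormal, sub_zero]⟩
end

section
/- Let n ∈ ℕ and let D, N, E be real n×n matrices such that: D is diagonal with D_{ii} ≤ 0 for all i; N has nonnegative entries, zero diagonal, and row sums Σ_j N_{ij} = −D_{ii} for every i; and E has nonnegative entries with row sums Σ_j E_{ij} ≤ 1 for every i. Then every (complex) eigenvalue λ of the matrix M = D + N·E satisfies Re λ ≤ 0. -/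
/-!
Off the diagonal `M = D + N·E` agrees with `N·E`, which is entrywise nonnegative, and the row
sums of `N·E` are at most those of `N`, i.e. `-D_{ii}`; so every row of `M` sums to at most `0`.
A real matrix with nonnegative off-diagonal entries and nonpositive row sums has all its
Gershgorin discs `|z - M_{kk}| ≤ ∑_{j ≠ k} M_{kj}` in the closed left half-plane.
-/

open Matrix Finset

namespace Matrix

variable {ι : Type*} [Fintype ι]

theorem IsDiag.sum_row {R : Type*} [AddCommMonoid R] {D : Matrix ι ι R} (hD : D.IsDiag) (i : ι) :
    ∑ j, D i j = D i i :=
  sum_eq_single i (fun _ _ hj => hD hj.symm) (by simp)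

variable {R : Type*} [CommSemiring R] [PartialOrder R] [IsOrderedRing R]

theorem mul_apply_nonneg {N E : Matrix ι ι R} (hN : ∀ i j, 0 ≤ N i j) (hE : ∀ i j, 0 ≤ E i j)
    (i j : ι) : 0 ≤ (N * E) i j := by
  rw [mul_apply]
  exact sum_nonneg fun l _ => mul_nonneg (hN i l) (hE l j)

theorem sum_mul_apply_le_sum {N E : Matrix ι ι R} (hN : ∀ i j, 0 ≤ N i j)
    (hE : ∀ i, ∑ j, E i j ≤ 1) (i : ι) : ∑ j, (N * E) i j ≤ ∑ j, N i j :=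
  calc ∑ j, (N * E) i j = ∑ l, N i l * ∑ j, E l j := by
        simp only [mul_apply, mul_sum]
        exact sum_comm
    _ ≤ ∑ l, N i l * 1 := sum_le_sum fun l _ => mul_le_mul_of_nonneg_left (hE l) (hN i l)
    _ = ∑ j, N i j := by simp only [mul_one]

variable [DecidableEq ι]

theorem exists_re_le_of_mem_spectrum_map (A : Matrix ι ι ℝ) {μ : ℂ}
    (hμ : μ ∈ spectrum ℂ (A.map (algebraMap ℝ ℂ))) :
    ∃ k, μ.re ≤ A k k + ∑ j ∈ univ.erase k, |A k j| := by
  have hμ' : Module.End.HasEigenvalue (toLin' (A.map (algebraMap ℝ ℂ))) μ := by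
    rwa [Module.End.hasEigenvalue_iff_mem_spectrum, spectrum_toLin']
  obtain ⟨k, hk⟩ := eigenvalue_mem_ball hμ'
  refine ⟨k, ?_⟩
  rw [Metric.mem_closedBall, Complex.dist_eq] at hk
  have hre : μ.re - A k k ≤ ‖μ - A k k‖ := by
    simpa using Complex.re_le_norm (μ - A k k)
  simp only [map_apply, Complex.coe_algebraMap, Complex.norm_real, Real.norm_eq_abs] at hk
  linarith

theorem re_nonpos_of_mem_spectrum_map {A : Matrix ι ι ℝ}
    (hA_offDiag : ∀ i j, i ≠ j → 0 ≤ A i j) (hA_rowsum : ∀ i, ∑ j, A i j ≤ 0) {μ : ℂ}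
    (hμ : μ ∈ spectrum ℂ (A.map (algebraMap ℝ ℂ))) : μ.re ≤ 0 := by
  obtain ⟨k, hk⟩ := A.exists_re_le_of_mem_spectrum_map hμ
  have habs : ∑ j ∈ univ.erase k, |A k j| = ∑ j ∈ univ.erase k, A k j :=
    sum_congr rfl fun j hj => abs_of_nonneg (hA_offDiag k j (ne_of_mem_erase hj).symm)
  rw [habs, add_sum_erase _ _ (mem_univ k)] at hk
  exact hk.trans (hA_rowsum k)

end Matrix

theorem implicit_cpm_eigenvalues_left_half_plane_general
    (n : ℕ) (D N E : Matrix (Fin n) (Fin n) ℝ)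
    (hD_diag : D.IsDiag)
    (hN_nonneg : ∀ i j, 0 ≤ N i j)
    (hN_rowsum : ∀ i, ∑ j, N i j = -(D i i))
    (hE_nonneg : ∀ i j, 0 ≤ E i j) (hE_rowsum : ∀ i, ∑ j, E i j ≤ 1)
    (μ : ℂ) (hμ : μ ∈ spectrum ℂ ((D + N * E).map (algebraMap ℝ ℂ))) :
    μ.re ≤ 0 := by
  refine re_nonpos_of_mem_spectrum_map (fun i j hij => ?_) (fun i => ?_) hμ
  · simpa [hD_diag hij] using mul_apply_nonneg hN_nonneg hE_nonneg i j
  · calc ∑ j, (D + N * E) i j = D i i + ∑ j, (N * E) i j := by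
          simp only [Matrix.add_apply, sum_add_distrib, hD_diag.sum_row]
      _ ≤ D i i + ∑ j, N i j :=
          add_le_add_right (sum_mul_apply_le_sum hN_nonneg hE_rowsum i) _
      _ = 0 := by rw [hN_rowsum, add_neg_cancel]

/-- Stability of the implicit closest point matrix `M = D + N·E`: if `D` is
diagonal with nonpositive diagonal, `N` is nonnegative with zero diagonal and
row sums `−D_{ii}`, and `E` is nonnegative with row sums at most `1`, then
every complex eigenvalue of `M` has nonpositive real part. -/
theorem implicit_cpm_eigenvalues_left_half_plane
    (n : ℕ) (D N E : Matrix (Fin n) (Fin n) ℝ)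
    (hD_diag : D.IsDiag) (hD_nonpos : ∀ i, D i i ≤ 0)
    (hN_nonneg : ∀ i j, 0 ≤ N i j) (hN_diag : ∀ i, N i i = 0)
    (hN_rowsum : ∀ i, ∑ j, N i j = -(D i i))
    (hE_nonneg : ∀ i j, 0 ≤ E i j) (hE_rowsum : ∀ i, ∑ j, E i j ≤ 1)
    (μ : ℂ) (hμ : μ ∈ spectrum ℂ ((D + N * E).map (algebraMap ℝ ℂ))) :
    μ.re ≤ 0 :=
  implicit_cpm_eigenvalues_left_half_plane_general n D N E hD_diag hN_nonneg hN_rowsum hE_nonneg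
    hE_rowsum μ hμ
end

section
/- In a real inner product space, let Γ be a nonempty set, z a point, and x* ∈ Γ the unique closest point of z in Γ. For t ∈ [0,1] set y_t = x* + t·(z − x*). Then any w ∈ Γ attaining the distance from y_t to Γ (i.e. with ‖y_t − w‖ ≤ ‖y_t − v‖ for all v ∈ Γ) also attains the distance from z to Γ, i.e. ‖z − w‖ = ‖z − x*‖, and hence w = x*. -/
/-! A point `y` of the segment `[x*, z]` satisfies `d(z, y) + d(y, x*) = d(z, x*)`, so for a
nearest point `w` of `y` the triangle inequality gives
`d(z, w) ≤ d(z, y) + d(y, w) ≤ d(z, y) + d(y, x*) = d(z, x*)`; hence `w` is also a nearest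
point of `z`, and uniqueness forces `w = x*`. -/

theorem dist_le_of_forall_dist_le_of_dist_add_dist_eq {α : Type*} [PseudoMetricSpace α]
    {Γ : Set α} {x y z w : α} (hx : x ∈ Γ) (hy : dist z y + dist y x = dist z x)
    (hw : ∀ v ∈ Γ, dist y w ≤ dist y v) : dist z w ≤ dist z x :=
  calc dist z w ≤ dist z y + dist y w := dist_triangle z y w
    _ ≤ dist z y + dist y x := by gcongr; exact hw x hx
    _ = dist z x := hy

theorem unique_closest_point_propagates_general
    {E : Type*} [NormedAddCommGroup E] [InnerProductSpace ℝ E]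
    (Γ : Set E) (z xstar : E) (hx : xstar ∈ Γ)
    (hclosest : ∀ w ∈ Γ, ‖z - xstar‖ ≤ ‖z - w‖)
    (huniq : ∀ w ∈ Γ, ‖z - w‖ = ‖z - xstar‖ → w = xstar)
    (t : ℝ) (ht : t ∈ Set.Icc (0 : ℝ) 1)
    (w : E) (hw : w ∈ Γ)
    (hwmin : ∀ v ∈ Γ, ‖(xstar + t • (z - xstar)) - w‖ ≤ ‖(xstar + t • (z - xstar)) - v‖) :
    ‖z - w‖ = ‖z - xstar‖ ∧ w = xstar := by
  have hseg : xstar + t • (z - xstar) ∈ segment ℝ z xstar := by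
    rw [segment_symm, segment_eq_image']
    exact ⟨t, ht, rfl⟩
  have hle : ‖z - w‖ ≤ ‖z - xstar‖ := by
    simp only [← dist_eq_norm] at hwmin ⊢
    exact dist_le_of_forall_dist_le_of_dist_add_dist_eq hx
      (dist_add_dist_of_mem_segment hseg) hwmin
  have heq : ‖z - w‖ = ‖z - xstar‖ := le_antisymm hle (hclosest w hw)
  exact ⟨heq, huniq w hw heq⟩

/-- In a real inner product space, if `x*` is the unique closest point of `z`
in `Γ` and `y_t = x* + t • (z − x*)` with `t ∈ [0,1]`, then any `w ∈ Γ`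
attaining the distance from `y_t` to `Γ` also attains the distance from `z`
to `Γ`, i.e. `‖z − w‖ = ‖z − x*‖`, and hence `w = x*`. -/
theorem unique_closest_point_propagates
    {E : Type*} [NormedAddCommGroup E] [InnerProductSpace ℝ E]
    (Γ : Set E) (hΓ : Γ.Nonempty) (z xstar : E) (hx : xstar ∈ Γ)
    (hclosest : ∀ w ∈ Γ, ‖z - xstar‖ ≤ ‖z - w‖)
    (huniq : ∀ w ∈ Γ, ‖z - w‖ = ‖z - xstar‖ → w = xstar)
    (t : ℝ) (ht : t ∈ Set.Icc (0 : ℝ) 1)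
    (w : E) (hw : w ∈ Γ)
    (hwmin : ∀ v ∈ Γ, ‖(xstar + t • (z - xstar)) - w‖ ≤ ‖(xstar + t • (z - xstar)) - v‖) :
    ‖z - w‖ = ‖z - xstar‖ ∧ w = xstar :=
  unique_closest_point_propagates_general Γ z xstar hx hclosest huniq t ht w hw hwmin
end
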